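/- arXiv:2110.06881 — 3 statements merged into one kernel-verified Lean document; each statement's English description precedes it below -/
import Mathlib

section
/- Define W : (0,1) → ℝ by W(θ) = Σₖ mᵏ·Φ((√(σ² + σₖ²)·Φ⁻¹(c) + σ²μ − σ²θ)/(−σₖ)) − θ, where mᵏ > 0, Σₖ mᵏ = 1, σ, σₖ > 0, c ∈ (0,1), μ ∈ ℝ. Then lim_{θ→0⁺} W(θ) > 0 and lim_{θ→1⁻} W(θ) < 0, and hence there exists θ* ∈ (0,1) with W(θ*) = 0. -/
open MeasureTheory ProbabilityTheory Filter

/-- The standard normal density `φ`. -/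
noncomputable def stdGaussianPDF (x : ℝ) : ℝ := Real.exp (-x ^ 2 / 2) / Real.sqrt (2 * Real.pi)

/-- The standard normal CDF `Φ`. -/
noncomputable def stdGaussianCDF (x : ℝ) : ℝ := ∫ t in Set.Iic x, stdGaussianPDF t

lemma pdf_eq : stdGaussianPDF = fun x => Real.exp (-(1/2) * x ^ 2) * (Real.sqrt (2 * Real.pi))⁻¹ := by
  funext x
  have h : -x ^ 2 / 2 = -(1/2) * x ^ 2 := by ring
  rw [stdGaussianPDF, h, div_eq_mul_inv]

lemma pdf_pos (x : ℝ) : 0 < stdGaussianPDF x := by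
  have := Real.sqrt_pos.2 (by positivity : (0:ℝ) < 2 * Real.pi)
  exact div_pos (Real.exp_pos _) this

lemma pdf_integrable : Integrable stdGaussianPDF := by
  rw [pdf_eq]
  exact (integrable_exp_neg_mul_sq (by norm_num : (0:ℝ) < 1/2)).mul_const _

lemma pdf_total : ∫ x, stdGaussianPDF x = 1 := by
  rw [pdf_eq]
  rw [integral_mul_const, integral_gaussian]
  rw [show Real.pi / (1/2) = 2 * Real.pi by ring]
  exact mul_inv_cancel₀ (by positivity)

lemma cdf_pos (x : ℝ) : 0 < stdGaussianCDF x := by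
  rw [stdGaussianCDF, setIntegral_pos_iff_support_of_nonneg_ae
    (Filter.Eventually.of_forall fun t => (pdf_pos t).le) pdf_integrable.integrableOn]
  have : Function.support stdGaussianPDF = Set.univ := by
    ext t; simp [(pdf_pos t).ne']
  rw [this, Set.univ_inter]
  simp

lemma cdf_lt_one (x : ℝ) : stdGaussianCDF x < 1 := by
  have h := intervalIntegral.integral_Iic_add_Ioi (b := x) pdf_integrable.integrableOn pdf_integrable.integrableOn
  rw [pdf_total] at h
  have hpos : 0 < ∫ t in Set.Ioi x, stdGaussianPDF t := by
    rw [setIntegral_pos_iff_support_of_nonneg_ae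
      (Filter.Eventually.of_forall fun t => (pdf_pos t).le) pdf_integrable.integrableOn]
    have : Function.support stdGaussianPDF = Set.univ := by
      ext t; simp [(pdf_pos t).ne']
    rw [this, Set.univ_inter]
    simp
  rw [stdGaussianCDF]; linarith

lemma cdf_continuous : Continuous stdGaussianCDF := by
  have h := pdf_integrable.continuous_primitive 0
  have heq : ∀ x, stdGaussianCDF x = (∫ t in Set.Iic 0, stdGaussianPDF t) + ∫ t in (0:ℝ)..x, stdGaussianPDF t := by
    intro x
    rw [← intervalIntegral.integral_Iic_sub_Iic pdf_integrable.integrableOn pdf_integrable.integrableOn]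
    rw [stdGaussianCDF]; ring
  have : stdGaussianCDF = fun x => (∫ t in Set.Iic 0, stdGaussianPDF t) + ∫ t in (0:ℝ)..x, stdGaussianPDF t := funext heq
  rw [this]
  exact continuous_const.add h


/-- The standard normal quantile function `Φ⁻¹`. -/
noncomputable def stdGaussianCDFInv (c : ℝ) : ℝ := Function.invFun stdGaussianCDF c

/-- Endpoint limits of the fixed-point map `W` and existence of an equilibrium threshold. -/
theorem stmt6 {K : Type*} [Fintype K] [Nonempty K] (m σk : K → ℝ) (σ μ c : ℝ)
    (hm : ∀ k, 0 < m k) (hsum : ∑ k, m k = 1) (hσ : 0 < σ) (hσk : ∀ k, 0 < σk k)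
    (hc : c ∈ Set.Ioo (0:ℝ) 1) (W : ℝ → ℝ)
    (hW : ∀ θ, W θ = (∑ k, m k * stdGaussianCDF
        ((Real.sqrt (σ ^ 2 + σk k ^ 2) * stdGaussianCDFInv c + σ ^ 2 * μ - σ ^ 2 * θ)
          / (-σk k))) - θ) :
    (∃ L0, Tendsto W (nhdsWithin 0 (Set.Ioi 0)) (nhds L0) ∧ 0 < L0) ∧
    (∃ L1, Tendsto W (nhdsWithin 1 (Set.Iio 1)) (nhds L1) ∧ L1 < 0) ∧
    ∃ θstar ∈ Set.Ioo (0:ℝ) 1, W θstar = 0 := by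
  have hWc : Continuous W := by
    have hWe : W = fun θ => (∑ k, m k * stdGaussianCDF
        ((Real.sqrt (σ ^ 2 + σk k ^ 2) * stdGaussianCDFInv c + σ ^ 2 * μ - σ ^ 2 * θ)
          / (-σk k))) - θ := funext hW
    rw [hWe]
    refine (continuous_finset_sum _ fun k _ => ?_).sub continuous_id
    exact continuous_const.mul (cdf_continuous.comp (by fun_prop))
  have hW0 : 0 < W 0 := by
    rw [hW]
    simp only [mul_zero, sub_zero]
    exact Finset.sum_pos (fun k _ => mul_pos (hm k) (cdf_pos _)) Finset.univ_nonempty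
  have hW1 : W 1 < 0 := by
    rw [hW]
    have h := Finset.sum_lt_sum_of_nonempty (Finset.univ_nonempty (α := K))
      (fun k _ => mul_lt_of_lt_one_right (hm k)
        (cdf_lt_one ((Real.sqrt (σ ^ 2 + σk k ^ 2) * stdGaussianCDFInv c + σ ^ 2 * μ
          - σ ^ 2 * 1) / (-σk k))))
    rw [hsum] at h
    linarith
  refine ⟨⟨W 0, (hWc.tendsto 0).mono_left nhdsWithin_le_nhds, hW0⟩,
    ⟨W 1, (hWc.tendsto 1).mono_left nhdsWithin_le_nhds, hW1⟩, ?_⟩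
  have h := intermediate_value_Ioo' (by norm_num : (0:ℝ) ≤ 1) hWc.continuousOn
    (Set.mem_Ioo.2 ⟨hW1, hW0⟩)
  obtain ⟨θ, hθ, hθ0⟩ := h
  exact ⟨θ, hθ, hθ0⟩
end

section
/- Consider the linear system İ^{d,k}_i(t) = −γ·I^{d,k}_i(t) + λᵢ·d·Θ(t), where Θ(t) = (1/d̄)·Σ_{d,k,i} d·m^{d,k}_i·I^{d,k}_i(t), d̄ = Σ_d d·m^d, λ₀ = λ, λ₁ = βλ, γ, λ > 0, β ∈ (0,1), m^{d,k}_i ≥ 0. If Σ_{d,k,i} d²·λᵢ·m^{d,k}_i/γ ≤ d̄, then V(t) = Σ_{d,k,i} (d·m^{d,k}_i/γ)·I^{d,k}_i(t) is non-increasing along solutions with nonnegative initial conditions; in fact dV/dt = Θ(t)·(−d̄ + Σ_{d,k,i} d²λᵢm^{d,k}_i/γ) ≤ 0. -/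
/-!
Both `V` and `Θ` are multiples of `Σ d m I`, namely `V = (d̄/γ) Θ`. Differentiating along the
linear system gives `V' = Θ (S - d̄)` with `S = Σ d² λᵢ m / γ`, hence `Θ' = (γ/d̄)(S - d̄) Θ`, so
`Θ(t) = Θ(0) exp((γ/d̄)(S - d̄) t) ≥ 0` and `V' ≤ 0` as soon as `S ≤ d̄`.
-/

open Finset

lemma antitoneOn_of_hasDerivAt_nonpos {D : Set ℝ} (hD : Convex ℝ D) {f f' : ℝ → ℝ}
    (hf : ∀ x ∈ D, HasDerivAt f (f' x) x) (hf'₀ : ∀ x ∈ D, f' x ≤ 0) : AntitoneOn f D :=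
  antitoneOn_of_hasDerivWithinAt_nonpos hD
    (fun x hx ↦ (hf x hx).continuousAt.continuousWithinAt)
    (fun x hx ↦ (hf x (interior_subset hx)).hasDerivWithinAt)
    (fun x hx ↦ hf'₀ x (interior_subset hx))

lemma eq_mul_exp_of_hasDerivAt_mul_self {f : ℝ → ℝ} {a c : ℝ}
    (hf : ∀ t ∈ Set.Ici a, HasDerivAt f (c * f t) t) :
    ∀ t ∈ Set.Ici a, f t = f a * Real.exp (c * (t - a)) := by
  set g : ℝ → ℝ := fun t ↦ f t * Real.exp (-(c * (t - a)))
  have hg : ∀ t ∈ Set.Ici a, HasDerivAt g 0 t := fun t ht ↦ by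
    have hexp : HasDerivAt (fun s ↦ Real.exp (-(c * (s - a))))
        (Real.exp (-(c * (t - a))) * -c) t := by
      simpa using (((hasDerivAt_id t).sub_const a).const_mul c).fun_neg.exp
    exact ((hf t ht).fun_mul hexp).congr_deriv (by ring)
  intro t ht
  have hconst := constant_of_has_deriv_right_zero (a := a) (b := t)
    (fun x hx ↦ (hg x hx.1).continuousAt.continuousWithinAt)
    (fun x hx ↦ (hg x hx.1).hasDerivWithinAt) t ⟨ht, le_rfl⟩
  simp only [g, sub_self, mul_zero, neg_zero, Real.exp_zero, mul_one] at hconst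
  rw [← hconst, mul_assoc, ← Real.exp_add, neg_add_cancel, Real.exp_zero, mul_one]

lemma HasDerivAt.fun_sum_sum_sum {α β ι : Type*} [Fintype β] [Fintype ι] (s : Finset α)
    {w : α → β → ι → ℝ} {u : α → β → ι → ℝ → ℝ} {u' : α → β → ι → ℝ} {t : ℝ}
    (hu : ∀ a ∈ s, ∀ b i, HasDerivAt (u a b i) (u' a b i) t) :
    HasDerivAt (fun t ↦ ∑ a ∈ s, ∑ b, ∑ i, w a b i * u a b i t)
      (∑ a ∈ s, ∑ b, ∑ i, w a b i * u' a b i) t :=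
  HasDerivAt.fun_sum fun a ha ↦ HasDerivAt.fun_sum fun b _ ↦ HasDerivAt.fun_sum fun i _ ↦
    (hu a ha b i).const_mul _

section Lyapunov

variable {K : Type*} [Fintype K] {D : ℕ} {γ dbar : ℝ} {lami : Fin 2 → ℝ}
  {m : ℕ → K → Fin 2 → ℝ} {I : ℕ → K → Fin 2 → ℝ → ℝ} {Θ V : ℝ → ℝ}

lemma lyapunov_eq_mul_theta (hγ : γ ≠ 0) (hdbar : dbar ≠ 0)
    (hΘ : ∀ t, Θ t = (1 / dbar) * ∑ d ∈ Icc 1 D, ∑ k, ∑ i, (d : ℝ) * m d k i * I d k i t)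
    (hV : ∀ t, V t = ∑ d ∈ Icc 1 D, ∑ k, ∑ i, ((d : ℝ) * m d k i / γ) * I d k i t) (t : ℝ) :
    V t = dbar / γ * Θ t := by
  have hcoef : dbar / γ * (1 / dbar) = 1 / γ := by field_simp
  rw [hV, hΘ, ← mul_assoc, hcoef, mul_sum]
  refine sum_congr rfl fun d _ ↦ ?_
  simp only [mul_sum]
  refine sum_congr rfl fun k _ ↦ sum_congr rfl fun i _ ↦ ?_
  ring

lemma hasDerivAt_lyapunov (hγ : γ ≠ 0) (hdbar : dbar ≠ 0)
    (hΘ : ∀ t, Θ t = (1 / dbar) * ∑ d ∈ Icc 1 D, ∑ k, ∑ i, (d : ℝ) * m d k i * I d k i t)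
    (hODE : ∀ d ∈ Icc 1 D, ∀ k i, ∀ t ∈ Set.Ici (0:ℝ),
      HasDerivAt (I d k i) (-γ * I d k i t + lami i * (d : ℝ) * Θ t) t)
    (hV : ∀ t, V t = ∑ d ∈ Icc 1 D, ∑ k, ∑ i, ((d : ℝ) * m d k i / γ) * I d k i t) :
    ∀ t ∈ Set.Ici (0:ℝ), HasDerivAt V (Θ t * (-dbar + ∑ d ∈ Icc 1 D,
        ∑ k, ∑ i, (d : ℝ) ^ 2 * lami i * m d k i / γ)) t := by
  intro t ht
  rw [show V = _ from funext hV]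
  refine (HasDerivAt.fun_sum_sum_sum _ fun d hd k i ↦ hODE d hd k i t ht).congr_deriv ?_
  have hterm : ∀ (d : ℕ) k i, (d : ℝ) * m d k i / γ * (-γ * I d k i t + lami i * d * Θ t) =
      -γ * ((d : ℝ) * m d k i / γ * I d k i t) + (d : ℝ) ^ 2 * lami i * m d k i / γ * Θ t :=
    fun d k i ↦ by ring
  simp only [hterm, sum_add_distrib, ← mul_sum, ← sum_mul]
  rw [← hV, lyapunov_eq_mul_theta hγ hdbar hΘ hV]
  field_simp

end Lyapunov

theorem stmt9_general {K : Type*} [Fintype K] (D : ℕ) (γ : ℝ)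
    (hγ : 0 < γ)
    (lami : Fin 2 → ℝ)
    (m : ℕ → K → Fin 2 → ℝ) (hm : ∀ d k i, 0 ≤ m d k i)
    (dbar : ℝ)
    (hdbarpos : 0 < dbar)
    (I : ℕ → K → Fin 2 → ℝ → ℝ) (Θ : ℝ → ℝ)
    (hΘ : ∀ t, Θ t = (1 / dbar) *
      ∑ d ∈ Finset.Icc 1 D, ∑ k, ∑ i, (d : ℝ) * m d k i * I d k i t)
    (hODE : ∀ d ∈ Finset.Icc 1 D, ∀ k i, ∀ t ∈ Set.Ici (0:ℝ),
      HasDerivAt (I d k i) (-γ * I d k i t + lami i * (d : ℝ) * Θ t) t)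
    (hinit : ∀ d ∈ Finset.Icc 1 D, ∀ k i, 0 ≤ I d k i 0)
    (hcond : ∑ d ∈ Finset.Icc 1 D, ∑ k, ∑ i, (d : ℝ) ^ 2 * lami i * m d k i / γ ≤ dbar)
    (V : ℝ → ℝ)
    (hV : ∀ t, V t = ∑ d ∈ Finset.Icc 1 D, ∑ k, ∑ i, ((d : ℝ) * m d k i / γ) * I d k i t) :
    AntitoneOn V (Set.Ici 0) ∧
    ∀ t ∈ Set.Ici (0:ℝ),
      HasDerivAt V (Θ t * (-dbar + ∑ d ∈ Finset.Icc 1 D,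
        ∑ k, ∑ i, (d : ℝ) ^ 2 * lami i * m d k i / γ)) t ∧
      Θ t * (-dbar + ∑ d ∈ Finset.Icc 1 D,
        ∑ k, ∑ i, (d : ℝ) ^ 2 * lami i * m d k i / γ) ≤ 0 := by
  have hV' := hasDerivAt_lyapunov hγ.ne' hdbarpos.ne' hΘ hODE hV
  set S := ∑ d ∈ Finset.Icc 1 D, ∑ k, ∑ i, (d : ℝ) ^ 2 * lami i * m d k i / γ
  have hΘV : ∀ s, Θ s = γ / dbar * V s := fun s ↦ by
    rw [lyapunov_eq_mul_theta hγ.ne' hdbarpos.ne' hΘ hV]; field_simp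
  have hΘ' : ∀ t ∈ Set.Ici (0:ℝ), HasDerivAt Θ (γ / dbar * (-dbar + S) * Θ t) t := fun t ht ↦
    (((hV' t ht).const_mul (γ / dbar)).congr_deriv (by ring)).congr_of_eventuallyEq
      (Filter.Eventually.of_forall hΘV)
  have hΘ0 : 0 ≤ Θ 0 := by
    rw [hΘ]
    exact mul_nonneg (by positivity) <| sum_nonneg fun d hd ↦ sum_nonneg fun k _ ↦
      sum_nonneg fun i _ ↦ mul_nonneg (mul_nonneg d.cast_nonneg (hm d k i)) (hinit d hd k i)
  have hsign : ∀ t ∈ Set.Ici (0:ℝ), Θ t * (-dbar + S) ≤ 0 := fun t ht ↦ by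
    refine mul_nonpos_of_nonneg_of_nonpos ?_ (by linarith)
    rw [eq_mul_exp_of_hasDerivAt_mul_self hΘ' t ht]
    positivity
  exact ⟨antitoneOn_of_hasDerivAt_nonpos (convex_Ici 0) hV' hsign,
    fun t ht ↦ ⟨hV' t ht, hsign t ht⟩⟩

/-- Lyapunov computation: under `Σ d²λᵢ m^{d,k}_i/γ ≤ d̄`, the function
`V(t) = Σ (d m^{d,k}_i/γ) I^{d,k}_i(t)` is non-increasing along nonnegative solutions,
with `dV/dt = Θ(t)(−d̄ + Σ d²λᵢ m^{d,k}_i/γ) ≤ 0`. -/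
theorem stmt9 {K : Type*} [Fintype K] (D : ℕ) (γ lam β : ℝ)
    (hγ : 0 < γ) (hlam : 0 < lam) (hβ : β ∈ Set.Ioo (0:ℝ) 1)
    (lami : Fin 2 → ℝ) (hlami : lami 0 = lam ∧ lami 1 = β * lam)
    (m : ℕ → K → Fin 2 → ℝ) (hm : ∀ d k i, 0 ≤ m d k i)
    (dbar : ℝ) (hdbar : dbar = ∑ d ∈ Finset.Icc 1 D, (d : ℝ) * ∑ k, ∑ i, m d k i)
    (hdbarpos : 0 < dbar)
    (I : ℕ → K → Fin 2 → ℝ → ℝ) (Θ : ℝ → ℝ)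
    (hΘ : ∀ t, Θ t = (1 / dbar) *
      ∑ d ∈ Finset.Icc 1 D, ∑ k, ∑ i, (d : ℝ) * m d k i * I d k i t)
    (hODE : ∀ d ∈ Finset.Icc 1 D, ∀ k i, ∀ t ∈ Set.Ici (0:ℝ),
      HasDerivAt (I d k i) (-γ * I d k i t + lami i * (d : ℝ) * Θ t) t)
    (hinit : ∀ d ∈ Finset.Icc 1 D, ∀ k i, 0 ≤ I d k i 0)
    (hcond : ∑ d ∈ Finset.Icc 1 D, ∑ k, ∑ i, (d : ℝ) ^ 2 * lami i * m d k i / γ ≤ dbar)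
    (V : ℝ → ℝ)
    (hV : ∀ t, V t = ∑ d ∈ Finset.Icc 1 D, ∑ k, ∑ i, ((d : ℝ) * m d k i / γ) * I d k i t) :
    AntitoneOn V (Set.Ici 0) ∧
    ∀ t ∈ Set.Ici (0:ℝ),
      HasDerivAt V (Θ t * (-dbar + ∑ d ∈ Finset.Icc 1 D,
        ∑ k, ∑ i, (d : ℝ) ^ 2 * lami i * m d k i / γ)) t ∧
      Θ t * (-dbar + ∑ d ∈ Finset.Icc 1 D,
        ∑ k, ∑ i, (d : ℝ) ^ 2 * lami i * m d k i / γ) ≤ 0 :=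
  stmt9_general D γ hγ lami m hm dbar hdbarpos I Θ hΘ hODE hinit hcond V hV
end

section
/- Let e ∈ (0,1), σ, μ > 0, c ∈ (0,1). If σμ ≤ min{−Φ⁻¹(c), −Φ⁻¹(e), −(1 + Φ⁻¹(e))/√((Φ⁻¹(c))² + (Φ⁻¹(e))²)}, then the function Y(s) = μ + Φ⁻¹(c)/√(σ² + s²) + (s/(σ√(σ² + s²)))·Φ⁻¹(e) satisfies Y(s) ≤ 0 for all s ≥ 0. -/
open MeasureTheory ProbabilityTheory Filter

/-- Under condition (★), the threshold-lowering term `Y(s)` is nonpositive for all `s ≥ 0`. -/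
theorem stmt15 (σ μ c e : ℝ) (hσ : 0 < σ) (hμ : 0 < μ)
    (hc : c ∈ Set.Ioo (0:ℝ) 1) (he : e ∈ Set.Ioo (0:ℝ) 1)
    (h1e : 1 + stdGaussianCDFInv e < 0)
    (hstar : σ * μ ≤ min (-stdGaussianCDFInv c) (min (-stdGaussianCDFInv e)
      (-(1 + stdGaussianCDFInv e) /
        Real.sqrt ((stdGaussianCDFInv c) ^ 2 + (stdGaussianCDFInv e) ^ 2)))) :
    ∀ s : ℝ, 0 ≤ s →
      μ + stdGaussianCDFInv c / Real.sqrt (σ ^ 2 + s ^ 2)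
        + (s / (σ * Real.sqrt (σ ^ 2 + s ^ 2))) * stdGaussianCDFInv e ≤ 0 := by
  intro s hs
  set a := stdGaussianCDFInv c with ha'
  set b := stdGaussianCDFInv e with hb'
  have ha : σ * μ ≤ -a := le_trans hstar (min_le_left _ _)
  have hb : σ * μ ≤ -b := le_trans hstar (le_trans (min_le_right _ _) (min_le_left _ _))
  set R := Real.sqrt (σ ^ 2 + s ^ 2) with hR'
  have hRpos : 0 < R := Real.sqrt_pos.mpr (by positivity)
  have hRle : R ≤ σ + s := by
    rw [hR', show σ + s = Real.sqrt ((σ + s) ^ 2) from (Real.sqrt_sq (by positivity)).symm]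
    exact Real.sqrt_le_sqrt (by nlinarith)
  have key : μ + a / R + (s / (σ * R)) * b = (μ * σ * R + σ * a + s * b) / (σ * R) := by
    field_simp
  rw [key]
  apply div_nonpos_of_nonpos_of_nonneg
  · nlinarith [mul_le_mul_of_nonneg_left ha hσ.le, mul_le_mul_of_nonneg_left hb hs,
      mul_le_mul_of_nonneg_left hRle (mul_pos hμ hσ).le]
  · positivity
end
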